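/- arXiv:math/0601566 — 2 statements merged into one kernel-verified Lean document; each statement's English description precedes it below -/
import Mathlib

section
/- Let R be a commutative ring with finitely many minimal primes and f(x) ∈ R[x] a monic polynomial of positive degree. Then the ring S = R[x]/(f(x)) has only finitely many minimal primes. -/
/-!
`S = R[X]/(f)` is a finite free `R`-algebra. Freeness gives flatness and hence going-down, so
every minimal prime of `S` lies over a minimal prime of `R`; finiteness makes the fibres of
`Spec S → Spec R` finite. Hence the minimal primes of `S` lie in finitely many finite fibres.
-/

open Polynomial

section

variable {R S : Type*} [CommRing R] [CommRing S] [Algebra R S]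

theorem Ideal.under_mem_minimalPrimes [Algebra.HasGoingDown R S] {Q : Ideal S}
    (hQ : Q ∈ minimalPrimes S) : Q.under R ∈ minimalPrimes R := by
  have : Q.IsPrime := hQ.1.1
  refine ⟨⟨inferInstance, bot_le⟩, fun p ⟨hp, _⟩ hpQ ↦ ?_⟩
  have : Q.LiesOver (Q.under R) := ⟨rfl⟩
  obtain ⟨P, hPQ, hP, hPp⟩ := Ideal.exists_ideal_le_liesOver_of_le Q hpQ
  have hQP : Q ≤ P := hQ.2 ⟨hP, bot_le⟩ hPQ
  rw [P.over_def p]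
  exact Ideal.comap_mono hQP

theorem minimalPrimes.finite_of_hasGoingDown [Algebra.HasGoingDown R S]
    [Algebra.QuasiFinite R S] (hR : (minimalPrimes R).Finite) : (minimalPrimes S).Finite := by
  refine (hR.biUnion fun p _ ↦ Algebra.QuasiFinite.finite_primesOver (S := S) p).subset ?_
  intro Q hQ
  have : Q.IsPrime := hQ.1.1
  exact Set.mem_biUnion (Ideal.under_mem_minimalPrimes hQ) ⟨inferInstance, ⟨rfl⟩⟩

end

theorem stmt_9_general {R : Type*} [CommRing R] (hR : (minimalPrimes R).Finite)
    (f : R[X]) (hf : f.Monic) :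
    (minimalPrimes (R[X] ⧸ Ideal.span {f})).Finite := by
  have := hf.free_quotient
  have := hf.finite_quotient
  exact minimalPrimes.finite_of_hasGoingDown hR

theorem stmt_9 {R : Type*} [CommRing R] (hR : (minimalPrimes R).Finite)
    (f : R[X]) (hf : f.Monic) (hdeg : 0 < f.natDegree) :
    (minimalPrimes (R[X] ⧸ Ideal.span {f})).Finite :=
  stmt_9_general hR f hf
end

section
/- If R is a coherent integral domain that is FGFC, and S is a finite R-algebra that is torsion-free as an R-module, then S is an FGFC ring. -/
def IsFGFC (R : Type*) [CommRing R] : Prop :=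
  ∀ I : Ideal R, I.FG → I.minimalPrimes.Finite

/-- A ring is coherent if every finitely generated ideal is finitely
presented as a module. -/
def IsCoherent (R : Type*) [CommRing R] : Prop :=
  ∀ I : Ideal R, I.FG → Module.FinitePresentation R I

/-!
A finite torsion-free module over a domain embeds into some `R ^ n`, so over a coherent `R` the
algebra `S` is a finitely presented `R`-module; hence for a finitely generated ideal `J` of `S`,
the relations of `S ⧸ J` as a quotient of `R ^ m` are spanned by the rows of a finite matrix `A`.

Let `Q` be a minimal prime of `J`, `p = Q ∩ R`, and `δ ∉ p` a `k × k` minor of `A` with `k`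
maximal, so that the `(k + 1)`-minors lie in `p`. Then `p` is minimal over them: let `p'` be a
prime between them and `x ∈ p`. Minimality of `Q` gives `s ∉ Q` with `x ^ e * s ∈ J`. With the
adjugate of `δ`, a lift of `δ • s` to `R ^ m` is congruent modulo relations to a vector `r'`
vanishing on the columns of `δ`, and then `x ^ e • r'` is a relation. Each entry of a relation
vanishing on those columns, times `δ`, is a combination of `(k + 1)`-minors, so lies in `p'`. If
`x ∉ p'`, then all entries of `r'` lie in `p' ⊆ Q`, whence `δ * s ∈ Q`, which is absurd.

So the minimal primes of `J` lie over finitely many primes of `R`, and a finite algebra has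
finite fibres over `Spec R`.
-/

theorem Submodule.FG.comap_of_surjective {R M P : Type*} [CommRing R] [AddCommGroup M]
    [Module R M] [AddCommGroup P] [Module R P] {K : Submodule R P} (hK : K.FG) {φ : M →ₗ[R] P}
    (hφ : Function.Surjective φ) (hker : (LinearMap.ker φ).FG) : (K.comap φ).FG :=
  Submodule.fg_of_fg_map_of_fg_inf_ker φ (by rwa [Submodule.map_comap_eq_of_surjective hφ])
    (by rwa [inf_eq_right.mpr (LinearMap.ker_le_comap φ)])

namespace IsCoherent

variable {R M : Type*} [CommRing R] [AddCommGroup M] [Module R M]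

theorem fg_ker_pi (hcoh : IsCoherent R) {n : ℕ} [Module.Finite R M]
    (g : M →ₗ[R] Fin n → R) : (LinearMap.ker g).FG := by
  induction n generalizing M with
  | zero => simpa [Subsingleton.elim g 0] using Module.Finite.fg_top
  | succ n ih =>
    let h : M →ₗ[R] R := LinearMap.proj (Fin.last n) ∘ₗ g
    let g' : M →ₗ[R] Fin n → R := LinearMap.funLeft R R Fin.castSucc ∘ₗ g
    have := hcoh _ (Submodule.fg_range h)
    have hh : (LinearMap.ker h).FG := by
      simpa using Module.FinitePresentation.fg_ker h.rangeRestrict h.surjective_rangeRestrict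
    have : Module.Finite R (LinearMap.ker h) := .of_fg hh
    have hg : LinearMap.ker g = LinearMap.ker h ⊓ LinearMap.ker g' := by
      ext x
      simp [h, g', funext_iff, Fin.forall_fin_succ', LinearMap.funLeft, and_comm]
    rw [hg, ← Submodule.map_comap_subtype, ← LinearMap.ker_comp]
    exact (ih _).map _

theorem finitePresentation_of_injective (hcoh : IsCoherent R) [Module.Finite R M] {n : ℕ}
    (ψ : M →ₗ[R] Fin n → R) (hψ : Function.Injective ψ) :
    Module.FinitePresentation R M := by
  obtain ⟨m, f, hf⟩ := Module.Finite.exists_fin' R M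
  refine Module.finitePresentation_of_free_of_surjective f hf ?_
  simpa [LinearMap.ker_comp, LinearMap.ker_eq_bot.mpr hψ] using hcoh.fg_ker_pi (ψ ∘ₗ f)

end IsCoherent

section TorsionFree

variable {R M : Type*} [CommRing R] [IsDomain R] [AddCommGroup M] [Module R M]

theorem exists_linearIndepOn_smul_mem_span {ι : Type*} [Finite ι] (b : ι → M)
    (hb : Submodule.span R (Set.range b) = ⊤) :
    ∃ s : Set ι, LinearIndepOn R b s ∧
      ∃ c : R, c ≠ 0 ∧ ∀ x, c • x ∈ Submodule.span R (Set.range fun i : s ↦ b i) := by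
  classical
  have := Fintype.ofFinite ι
  obtain ⟨s, hs, hmax⟩ := exists_maximal_linearIndepOn R b
  have hc : ∀ i, ∃ c : R, c ≠ 0 ∧ c • b i ∈ Submodule.span R (b '' s) := fun i ↦ by
    by_cases hi : i ∈ s
    · exact ⟨1, one_ne_zero, by simpa using Submodule.subset_span (Set.mem_image_of_mem b hi)⟩
    · exact hmax i hi
  choose c hc0 hcs using hc
  rw [Set.image_eq_range] at hcs
  refine ⟨s, hs, ∏ i, c i, Finset.prod_ne_zero_iff.mpr fun i _ ↦ hc0 i, fun x ↦ ?_⟩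
  have hx : x ∈ Submodule.span R (Set.range b) := hb ▸ trivial
  induction hx using Submodule.span_induction with
  | mem _ hy =>
    obtain ⟨i, rfl⟩ := hy
    rw [← Finset.prod_erase_mul _ _ (Finset.mem_univ i), mul_smul]
    exact Submodule.smul_mem _ _ (hcs i)
  | zero => simp
  | add _ _ _ _ h₁ h₂ => simpa [smul_add] using Submodule.add_mem _ h₁ h₂
  | smul r _ _ h => simpa [smul_comm _ r] using Submodule.smul_mem _ r h

theorem Module.Finite.exists_injective_pi [Module.Finite R M] [Module.IsTorsionFree R M] :
    ∃ (n : ℕ) (ψ : M →ₗ[R] Fin n → R), Function.Injective ψ := by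
  obtain ⟨m, b, hb⟩ := Module.Finite.exists_fin (R := R) (M := M)
  obtain ⟨s, hs, c, hc, hcs⟩ := exists_linearIndepOn_smul_mem_span b hb
  let B := (Module.Basis.span hs.linearIndependent).reindex (Finite.equivFin s)
  refine ⟨_, B.equivFun.toLinearMap ∘ₗ (LinearMap.lsmul R M c).codRestrict _ hcs, ?_⟩
  refine B.equivFun.injective.comp fun x y hxy ↦ smul_right_injective M hc ?_
  exact congrArg Subtype.val hxy

end TorsionFree

namespace Matrix

variable {R ι n : Type*} [CommRing R]

-- Rows and columns of a minor are chosen by arbitrary maps `Fin k → _`; the non-injective choices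
-- only add zeros. For a presentation matrix of a module these are, up to indexing, its Fitting
-- ideals.
def minorsIdeal (A : Matrix ι n R) (k : ℕ) : Ideal R :=
  Ideal.span (Set.range fun q : (Fin k → ι) × (Fin k → n) ↦ (A.submatrix q.1 q.2).det)

variable (A : Matrix ι n R) {k : ℕ}

theorem det_submatrix_mem_minorsIdeal (ρ : Fin k → ι) (ζ : Fin k → n) :
    (A.submatrix ρ ζ).det ∈ A.minorsIdeal k :=
  Ideal.subset_span ⟨(ρ, ζ), rfl⟩

theorem minorsIdeal_fg [Finite ι] [Finite n] (k : ℕ) : (A.minorsIdeal k).FG :=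
  Submodule.fg_span (Set.finite_range _)

theorem minorsIdeal_zero : A.minorsIdeal 0 = ⊤ :=
  (Ideal.eq_top_iff_one _).mpr <| by
    simpa using A.det_submatrix_mem_minorsIdeal finZeroElim finZeroElim

theorem minorsIdeal_eq_bot [Fintype n] (hk : Fintype.card n < k) : A.minorsIdeal k = ⊥ := by
  refine (Submodule.span_eq_bot).mpr ?_
  rintro _ ⟨⟨ρ, ζ⟩, rfl⟩
  obtain ⟨i, i', hne, heq⟩ := Fintype.exists_ne_map_eq_of_card_lt ζ (by simpa using hk)
  exact det_zero_of_column_eq hne fun l ↦ by simp [heq]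

theorem exists_minorsIdeal_not_le_and_succ_le [Fintype n] {p : Ideal R} (hp : p ≠ ⊤) :
    ∃ k ≤ Fintype.card n, ¬ A.minorsIdeal k ≤ p ∧ A.minorsIdeal (k + 1) ≤ p := by
  classical
  have hex : ∃ k, A.minorsIdeal (k + 1) ≤ p :=
    ⟨Fintype.card n, by simp [A.minorsIdeal_eq_bot (Nat.lt_succ_self _)]⟩
  refine ⟨Nat.find hex, Nat.find_min' hex (by simp [A.minorsIdeal_eq_bot (Nat.lt_succ_self _)]),
    ?_, Nat.find_spec hex⟩
  rcases h : Nat.find hex with _ | k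
  · simpa [minorsIdeal_zero, top_le_iff] using hp
  · exact Nat.find_min hex (by omega)

theorem det_of_snoc_of_castSucc_eq_zero (B : Fin k → Fin (k + 1) → R) (v : Fin (k + 1) → R)
    (hv : ∀ i : Fin k, v i.castSucc = 0) :
    det (of (Fin.snoc B v)) = v (Fin.last k) * det (of fun i j ↦ B i j.castSucc) := by
  rw [det_succ_row _ (Fin.last k), Fin.sum_univ_castSucc]
  simp only [of_apply, Fin.snoc_last, hv, mul_zero, zero_mul, Finset.sum_const_zero, zero_add,
    Fin.succAbove_last, ← two_mul, pow_mul, neg_one_sq, one_pow, one_mul]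
  congr 2
  ext i j
  simp

theorem det_mul_mem_minorsIdeal_succ (ρ : Fin k → ι) (ζ : Fin k → n) {w : n → R}
    (hw : w ∈ Submodule.span R (Set.range A)) (hwζ : ∀ i, w (ζ i) = 0) (j : n) :
    (A.submatrix ρ ζ).det * w j ∈ A.minorsIdeal (k + 1) := by
  let ζ' : Fin (k + 1) → n := Fin.snoc ζ j
  -- the `(k + 1)`-minor on the rows `ρ` and `v`, columns `ζ` and `j`, as a function of `v`
  let L : (n → R) →ₗ[R] R := (detRowAlternating.toMultilinearMap.curryRight
    fun l ↦ A (ρ l) ∘ ζ') ∘ₗ LinearMap.funLeft R R ζ'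
  have hL (v : n → R) : L v = det (of (Fin.snoc (fun l ↦ A (ρ l) ∘ ζ') (v ∘ ζ'))) := rfl
  have hspan : Submodule.span R (Set.range A) ≤ Submodule.comap L (A.minorsIdeal (k + 1)) := by
    refine Submodule.span_le.mpr ?_
    rintro _ ⟨l, rfl⟩
    rw [SetLike.mem_coe, Submodule.mem_comap, hL]
    convert A.det_submatrix_mem_minorsIdeal (Fin.snoc ρ l) ζ' using 2
    ext i
    cases i using Fin.lastCases <;> simp
  have := hspan hw
  rw [Submodule.mem_comap, hL, det_of_snoc_of_castSucc_eq_zero _ _ (by simp [ζ', hwζ])] at this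
  rw [mul_comm]
  convert this using 1
  simp only [ζ', Function.comp_apply, Fin.snoc_last, Fin.snoc_castSucc]
  rfl

theorem exists_det_smul_sub_mem_span_range (ρ : Fin k → ι) (ζ : Fin k → n) (r : n → R) :
    ∃ r' : n → R, (∀ i, r' (ζ i) = 0) ∧
      (A.submatrix ρ ζ).det • r - r' ∈ Submodule.span R (Set.range A) := by
  let c := vecMul (r ∘ ζ) (A.submatrix ρ ζ).adjugate
  refine ⟨(A.submatrix ρ ζ).det • r - ∑ l, c l • A (ρ l), fun i ↦ ?_, ?_⟩
  · have hc : c ᵥ* A.submatrix ρ ζ = (A.submatrix ρ ζ).det • (r ∘ ζ) := by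
      simp [c, vecMul_vecMul, adjugate_mul, vecMul_smul]
    have := congrFun hc i
    simp only [vecMul, dotProduct, submatrix_apply] at this
    simp [Finset.sum_apply, this]
  · simpa using Submodule.sum_mem _ fun l _ ↦
      Submodule.smul_mem _ (c l) (Submodule.subset_span (Set.mem_range_self (ρ l)))

end Matrix

theorem Ideal.exists_pow_mul_mem_of_mem_minimalPrimes {S : Type*} [CommRing S] {J Q : Ideal S}
    (hQ : Q ∈ J.minimalPrimes) {x : S} (hx : x ∈ Q) : ∃ n, ∃ s ∉ Q, x ^ n * s ∈ J := by
  have := hQ.isPrime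
  by_contra! h
  let T := Submonoid.powers x ⊔ Q.primeCompl
  have hJT : Disjoint (J : Set S) T := by
    refine Set.disjoint_left.mpr fun z hzJ hzT ↦ ?_
    obtain ⟨_, ⟨n, rfl⟩, s, hs, rfl⟩ := Submonoid.mem_sup.mp hzT
    exact h n s hs hzJ
  obtain ⟨P, hP, hJP, hPT⟩ := Ideal.exists_le_prime_disjoint J T hJT
  have hPQ : P ≤ Q := fun z hzP ↦ by
    by_contra hzQ
    exact Set.disjoint_left.mp hPT hzP
      (Submonoid.mem_sup_right (show z ∈ Q.primeCompl from hzQ))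
  exact Set.disjoint_left.mp hPT (hQ.2 ⟨hP, hJP⟩ hPQ hx)
    (Submonoid.mem_sup_left (Submonoid.mem_powers x))

section MinimalPrimes

variable {R S ι n : Type*} [CommRing R] [CommRing S] [Algebra R S] [Fintype n]
  {J Q : Ideal S} {φ : (n → R) →ₗ[R] S} {A : Matrix ι n R}

theorem comap_le_of_minorsIdeal_succ_le (hQ : Q ∈ J.minimalPrimes) (hφ : Function.Surjective φ)
    (hA : (J.restrictScalars R).comap φ = Submodule.span R (Set.range A))
    {k : ℕ} {ρ : Fin k → ι} {ζ : Fin k → n}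
    (hδ : (A.submatrix ρ ζ).det ∉ Q.comap (algebraMap R S))
    {p : Ideal R} [p.IsPrime] (hAp : A.minorsIdeal (k + 1) ≤ p)
    (hpQ : p ≤ Q.comap (algebraMap R S)) : Q.comap (algebraMap R S) ≤ p := by
  classical
  have := hQ.isPrime
  set δ := (A.submatrix ρ ζ).det
  intro x hx
  by_contra hxp
  obtain ⟨e, s, hs, hxs⟩ := Ideal.exists_pow_mul_mem_of_mem_minimalPrimes hQ hx
  obtain ⟨r, rfl⟩ := hφ s
  obtain ⟨r', hr'ζ, hr'⟩ := A.exists_det_smul_sub_mem_span_range ρ ζ r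
  have hN {v : n → R} : v ∈ Submodule.span R (Set.range A) ↔ φ v ∈ J := by rw [← hA]; rfl
  have hw : x ^ e • r' ∈ Submodule.span R (Set.range A) := by
    have : φ (x ^ e • r') =
        δ • (algebraMap R S x ^ e * φ r) - x ^ e • φ (δ • r - r') := by
      simp only [map_sub, map_smul, Algebra.smul_def (A := S), map_pow]
      ring
    rw [hN, this]
    exact J.sub_mem (Submodule.smul_of_tower_mem _ δ hxs)
      (Submodule.smul_of_tower_mem _ _ (hN.mp hr'))
  have hr'p (j : n) : r' j ∈ p := by
    have := hAp (A.det_mul_mem_minorsIdeal_succ ρ ζ hw (by simp [hr'ζ]) j)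
    rw [Pi.smul_apply, smul_eq_mul] at this
    have := (Ideal.IsPrime.mem_or_mem ‹_› this).resolve_left fun h ↦ hδ (hpQ h)
    exact (Ideal.IsPrime.mem_or_mem ‹_› this).resolve_left
      fun h ↦ hxp (Ideal.IsPrime.mem_of_pow_mem ‹_› e h)
  have hr'Q : φ r' ∈ Q := by
    rw [LinearMap.pi_apply_eq_sum_univ]
    exact Q.sum_mem fun j _ ↦ by
      rw [Algebra.smul_def]
      exact Q.mul_mem_right _ (hpQ (hr'p j))
  have hδs : algebraMap R S δ * φ r ∈ Q := by
    rw [← Algebra.smul_def, ← map_smul, ← sub_add_cancel (δ • r) r', map_add]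
    exact Q.add_mem (hQ.1.2 (hN.mp hr')) hr'Q
  exact (Ideal.IsPrime.mem_or_mem ‹_› hδs).elim hδ hs

theorem comap_mem_minimalPrimes_minorsIdeal (hQ : Q ∈ J.minimalPrimes)
    (hφ : Function.Surjective φ)
    (hA : (J.restrictScalars R).comap φ = Submodule.span R (Set.range A)) :
    ∃ k ≤ Fintype.card n,
      Q.comap (algebraMap R S) ∈ (A.minorsIdeal (k + 1)).minimalPrimes := by
  have := hQ.isPrime
  obtain ⟨k, hk, hAk, hAk1⟩ := A.exists_minorsIdeal_not_le_and_succ_le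
    (Ideal.IsPrime.comap (algebraMap R S) (K := Q)).ne_top
  obtain ⟨_, ⟨⟨ρ, ζ⟩, rfl⟩, hδ⟩ := Set.not_subset.mp (mt Ideal.span_le.mpr hAk)
  exact ⟨k, hk, ⟨inferInstance, hAk1⟩,
    fun p ⟨_, hAp⟩ hpQ ↦ comap_le_of_minorsIdeal_succ_le hQ hφ hA hδ hAp hpQ⟩

end MinimalPrimes

theorem stmt_15 {R S : Type*} [CommRing R] [IsDomain R] [CommRing S] [Algebra R S]
    (hcoh : IsCoherent R) (hR : IsFGFC R) [Module.Finite R S]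
    [NoZeroSMulDivisors R S] : IsFGFC S := by
  intro J hJ
  obtain ⟨n, ψ, hψ⟩ := Module.Finite.exists_injective_pi (R := R) (M := S)
  have := hcoh.finitePresentation_of_injective ψ hψ
  obtain ⟨m, φ, hφ⟩ := Module.Finite.exists_fin' R S
  obtain ⟨t, a, ha⟩ := Submodule.fg_iff_exists_fin_generating_family.mp <|
    (Submodule.FG.restrictScalars (R := R) hJ).comap_of_surjective hφ
      (Module.FinitePresentation.fg_ker φ hφ)
  refine ((Set.finite_Iic m).biUnion fun k _ ↦
    (hR _ ((Matrix.of a).minorsIdeal_fg (k + 1))).biUnion fun p _ ↦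
      Algebra.QuasiFinite.finite_primesOver p).subset fun Q hQ ↦ ?_
  obtain ⟨k, hk, hp⟩ := comap_mem_minimalPrimes_minorsIdeal hQ hφ (A := Matrix.of a) ha.symm
  simp only [Set.mem_iUnion]
  exact ⟨k, by simpa using hk, _, hp, hQ.isPrime, ⟨rfl⟩⟩
end
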